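/- Any 6-regular multigraph containing one of the excluded subgraphs lies in an infinite Δ-YY equivalence class. -/

import Mathlib

open scoped Classical

noncomputable section

/-- A multigraph: a finite vertex type together with a symmetric multiplicity
function recording the size of the connection (set of parallel edges) between
any two vertices; there are no loops. -/
structure MG : Type 1 where
  V : Type
  fin : Fintype V
  mult : V → V → ℕ
  symm : ∀ u v, mult u v = mult v u
  loopless : ∀ v, mult v v = 0

namespace MG

/-- Two vertices are adjacent when their connection is non-empty. -/
def Adj (G : MG) (u v : G.V) : Prop := 0 < G.mult u v

/-- Connection size as a function on unordered pairs of vertices. -/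
def multS (G : MG) : Sym2 G.V → ℕ := Sym2.lift ⟨G.mult, G.symm⟩

/-- Number of vertices. -/
def order (G : MG) : ℕ := @Fintype.card G.V G.fin

/-- Degree of a vertex, counting edges with multiplicity. -/
def deg (G : MG) (v : G.V) : ℕ :=
  haveI := G.fin
  ∑ u, G.mult v u

/-- `G` is `k`-regular. -/
def Regular (G : MG) (k : ℕ) : Prop := ∀ v, G.deg v = k

/-- A simple graph: every connection has size at most 1. -/
def Simple (G : MG) : Prop := ∀ u v, G.mult u v ≤ 1

/-- Isomorphism of multigraphs. -/
def Iso (G H : MG) : Prop :=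
  ∃ e : G.V ≃ H.V, ∀ u v, H.mult (e u) (e v) = G.mult u v

/-- Indicator: is `{a,b}` one of the three pairs `{u,v}, {u,w}, {v,w}`? -/
def triCount {V : Type} (u v w a b : V) : ℕ :=
  if s(a, b) ∈ ({s(u, v), s(u, w), s(v, w)} : Set (Sym2 V)) then 1 else 0

lemma triCount_symm {V : Type} (u v w a b : V) :
    triCount u v w a b = triCount u v w b a := by
  unfold triCount
  have h : s(a, b) = s(b, a) := Sym2.eq_swap
  rw [h]

/-- `u, v, w` form a delta (triangle): pairwise distinct and pairwise adjacent. -/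
def IsDelta (G : MG) (u v w : G.V) : Prop :=
  u ≠ v ∧ u ≠ w ∧ v ≠ w ∧ G.Adj u v ∧ G.Adj u w ∧ G.Adj v w

/-- `x` is the centre of a wye with external vertices `u, v, w`: the edges
incident to `x` are exactly two parallel edges to each of `u, v, w`. -/
def IsWye (G : MG) (x u v w : G.V) : Prop :=
  u ≠ v ∧ u ≠ w ∧ v ≠ w ∧ x ≠ u ∧ x ≠ v ∧ x ≠ w ∧
    G.mult x u = 2 ∧ G.mult x v = 2 ∧ G.mult x w = 2 ∧
    ∀ y : G.V, y ≠ u → y ≠ v → y ≠ w → G.mult x y = 0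

/-- Multiplicity function of the result of a Δ-YY transformation on the
delta `u, v, w`; the new vertex `x` is `none`. -/
def deltaMult (G : MG) (u v w : G.V) : Option G.V → Option G.V → ℕ
  | none, none => 0
  | none, some b => if b = u ∨ b = v ∨ b = w then 2 else 0
  | some a, none => if a = u ∨ a = v ∨ a = w then 2 else 0
  | some a, some b => G.mult a b - triCount u v w a b

/-- The result of the Δ-YY transformation on the delta `u, v, w`: one edge of
each of the connections `uv`, `uw`, `vw` is removed, a new vertex (`none`) is
added, joined by two parallel edges to each of `u, v, w`. -/
def deltaYY (G : MG) (u v w : G.V) : MG where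
  V := Option G.V
  fin := by haveI := G.fin; infer_instance
  mult := G.deltaMult u v w
  symm := by
    rintro (_ | a) (_ | b)
    · rfl
    · rfl
    · rfl
    · show G.mult a b - triCount u v w a b = G.mult b a - triCount u v w b a
      rw [G.symm a b, triCount_symm]
  loopless := by
    rintro (_ | a)
    · rfl
    · show G.mult a a - triCount u v w a a = 0
      rw [G.loopless]
      exact Nat.zero_sub _

/-- The result of the YY-Δ transformation on a wye with centre `x` and external
vertices `u, v, w`: the vertex `x` is deleted together with all its incident
edges, and one new edge is added to each of the connections `uv`, `uw`, `vw`. -/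
def yyDelta (G : MG) (x u v w : G.V) : MG where
  V := {y : G.V // y ≠ x}
  fin := by haveI := G.fin; infer_instance
  mult a b := if a = b then 0 else G.mult a.1 b.1 + triCount u v w a.1 b.1
  symm := by
    intro a b
    rcases eq_or_ne a b with h | h
    · subst h; rfl
    · rw [if_neg h, if_neg h.symm, G.symm a.1 b.1, triCount_symm]
  loopless := fun a => if_pos rfl

/-- `G'` is obtained from `G` by a Δ-YY transformation. -/
def DeltaYYStep (G G' : MG) : Prop :=
  ∃ u v w : G.V, G.IsDelta u v w ∧ Iso (G.deltaYY u v w) G'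

/-- `G'` is obtained from `G` by a YY-Δ transformation. -/
def YYDeltaStep (G G' : MG) : Prop :=
  ∃ x u v w : G.V, G.IsWye x u v w ∧ Iso (G.yyDelta x u v w) G'

/-- `G'` is obtained from `G` by a Δ-YY operation (either a Δ-YY transformation
or a YY-Δ transformation). -/
def Step (G G' : MG) : Prop := DeltaYYStep G G' ∨ YYDeltaStep G G'

/-- Δ-YY equivalence: `G` can be transformed into `H`, up to isomorphism, by a
finite sequence of Δ-YY operations. -/
def DYYEquiv : MG → MG → Prop :=
  Relation.EqvGen (fun G G' => Step G G' ∨ Iso G G')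

/-- The Δ-YY equivalence class of `G` contains only finitely many isomorphism
classes of multigraphs. -/
def FiniteClass (G : MG) : Prop :=
  ∃ S : Finset MG, ∀ H : MG, DYYEquiv G H → ∃ H' ∈ S, Iso H H'

/-- Connectivity: nonempty, and any two vertices are joined by a path. -/
def Connected (G : MG) : Prop :=
  Nonempty G.V ∧ ∀ u v : G.V, Relation.ReflTransGen G.Adj u v

/-- The multigraph obtained by deleting a set of vertices (and all edges
incident to them). -/
def deleteVerts (G : MG) (S : Set G.V) : MG where
  V := {y : G.V // y ∉ S}
  fin := by haveI := G.fin; infer_instance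
  mult a b := G.mult a.1 b.1
  symm := fun a b => G.symm a.1 b.1
  loopless := fun a => G.loopless a.1

/-- `G` is `k`-connected: it has more than `k` vertices and deleting any set of
fewer than `k` vertices leaves a connected multigraph. -/
def KConnected (G : MG) (k : ℕ) : Prop :=
  k < G.order ∧ ∀ S : Set G.V, S.ncard < k → (G.deleteVerts S).Connected

/-- `G` is planar: it has a drawing in the plane in which vertices are distinct
points, every edge (each parallel edge separately) is a continuous injective
arc joining the points of its endpoints, no arc passes through a vertex point
in its interior, and the interiors of the arcs of distinct edges are disjoint.
The arc of the `k`-th edge from `v` to `u` is the reverse of the arc of the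
`k`-th edge from `u` to `v` (they are the same edge drawn once). -/
def IsPlanar (G : MG) : Prop :=
  ∃ (pos : G.V → ℝ × ℝ) (γ : G.V → G.V → ℕ → C(unitInterval, ℝ × ℝ)),
    Function.Injective pos ∧
    (∀ u v k, k < G.mult u v →
      γ u v k 0 = pos u ∧ γ u v k 1 = pos v ∧ Function.Injective (γ u v k)) ∧
    (∀ u v k (t : unitInterval), γ v u k t = γ u v k (unitInterval.symm t)) ∧
    (∀ u v k, k < G.mult u v → ∀ t : unitInterval, t ≠ 0 → t ≠ 1 →
      ∀ z : G.V, γ u v k t ≠ pos z) ∧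
    (∀ u v k u' v' k', k < G.mult u v → k' < G.mult u' v' →
      (s(u, v) ≠ s(u', v') ∨ k ≠ k') →
      ∀ t t' : unitInterval, t ≠ 0 → t ≠ 1 → t' ≠ 0 → t' ≠ 1 →
        γ u v k t ≠ γ u' v' k' t')

/-- An independent set: no two of its vertices are adjacent. -/
def IsIndepSet (G : MG) (S : Set G.V) : Prop :=
  ∀ u ∈ S, ∀ v ∈ S, ¬ G.Adj u v

/-- The independence number `α(G)`: the maximum size of an independent set. -/
def indepNum (G : MG) : ℕ :=
  sSup {n | ∃ S : Set G.V, G.IsIndepSet S ∧ S.ncard = n}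

/-- The number of non-empty connections, i.e. the number of edges of the
simplification `G^S`. -/
def numConn (G : MG) : ℕ := {p : Sym2 G.V | G.multS p ≠ 0}.ncard

/-- The cyclomatic number `m - n + 1` of the simplification `G^S` of `G`. -/
def cyclomaticS (G : MG) : ℤ := (G.numConn : ℤ) - (G.order : ℤ) + 1

/-- `AddOnAt G a S` : the vertex set `S` of `G` carries (a subgraph copy of) an
add-on whose addition vertex is `a`.  An add-on of length 0 is a double edge or
a delta; an add-on of length `n ≥ 1` is a 4-cycle `a b c d` with the
connections `ab`, `ad` of size 1 and `bc`, `cd` of size 2, glued at `c` to an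
add-on of length `n - 1`. -/
inductive AddOnAt (G : MG) : G.V → Set G.V → Prop
  | double (a b : G.V) : a ≠ b → 2 ≤ G.mult a b → AddOnAt G a {a, b}
  | delta (a b c : G.V) : a ≠ b → a ≠ c → b ≠ c →
      1 ≤ G.mult a b → 1 ≤ G.mult a c → 1 ≤ G.mult b c → AddOnAt G a {a, b, c}
  | link (a b c d : G.V) (S : Set G.V) :
      a ≠ b → a ≠ c → a ≠ d → b ≠ c → b ≠ d → c ≠ d →
      1 ≤ G.mult a b → 1 ≤ G.mult a d → 2 ≤ G.mult b c → 2 ≤ G.mult c d →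
      AddOnAt G c S → S ∩ {a, b, d} = ∅ → AddOnAt G a ({a, b, d} ∪ S)

/-- `G` contains one of the four families of excluded subgraphs. -/
def HasExcluded (G : MG) : Prop :=
  -- (1) a 3-cycle in which at least one connection has size at least 2
  (∃ a b c : G.V, a ≠ b ∧ a ≠ c ∧ b ≠ c ∧
      2 ≤ G.mult a b ∧ 1 ≤ G.mult a c ∧ 1 ≤ G.mult b c) ∨
  -- (2) a 4-cycle with at least three connections of size at least 2 and an
  -- add-on glued at a vertex incident to two of them
  (∃ a b c d : G.V, ∃ S : Set G.V,
      a ≠ b ∧ a ≠ c ∧ a ≠ d ∧ b ≠ c ∧ b ≠ d ∧ c ≠ d ∧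
      2 ≤ G.mult a b ∧ 2 ≤ G.mult b c ∧ 2 ≤ G.mult c d ∧ 1 ≤ G.mult d a ∧
      AddOnAt G b S ∧ S ∩ {a, c, d} = ∅) ∨
  -- (3) a 5-cycle with all connections of size at least 2 and add-ons glued at
  -- two non-adjacent vertices of the cycle
  (∃ v₀ v₁ v₂ v₃ v₄ : G.V, ∃ S T : Set G.V,
      v₀ ≠ v₁ ∧ v₀ ≠ v₂ ∧ v₀ ≠ v₃ ∧ v₀ ≠ v₄ ∧ v₁ ≠ v₂ ∧ v₁ ≠ v₃ ∧ v₁ ≠ v₄ ∧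
      v₂ ≠ v₃ ∧ v₂ ≠ v₄ ∧ v₃ ≠ v₄ ∧
      2 ≤ G.mult v₀ v₁ ∧ 2 ≤ G.mult v₁ v₂ ∧ 2 ≤ G.mult v₂ v₃ ∧
      2 ≤ G.mult v₃ v₄ ∧ 2 ≤ G.mult v₄ v₀ ∧
      AddOnAt G v₀ S ∧ AddOnAt G v₂ T ∧
      S ∩ {v₁, v₂, v₃, v₄} = ∅ ∧ T ∩ {v₀, v₁, v₃, v₄} = ∅ ∧ S ∩ T = ∅) ∨
  -- (4) a 4-cycle with three connections of size at least 2, whose fourth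
  -- connection has size 1 and lies in a triangle, with add-ons glued at both
  -- vertices of that connection
  (∃ a b c d e : G.V, ∃ S T : Set G.V,
      a ≠ b ∧ a ≠ c ∧ a ≠ d ∧ a ≠ e ∧ b ≠ c ∧ b ≠ d ∧ b ≠ e ∧
      c ≠ d ∧ c ≠ e ∧ d ≠ e ∧
      2 ≤ G.mult a b ∧ 2 ≤ G.mult b c ∧ 2 ≤ G.mult c d ∧ G.mult d a = 1 ∧
      1 ≤ G.mult d e ∧ 1 ≤ G.mult e a ∧
      AddOnAt G a S ∧ AddOnAt G d T ∧
      S ∩ {b, c, d, e} = ∅ ∧ T ∩ {a, b, c, e} = ∅ ∧ S ∩ T = ∅)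

/-- The doubling of a simple graph: every edge is replaced by a connection of
size 2. -/
def doubling {V : Type} [Fintype V] (H : SimpleGraph V) : MG where
  V := V
  fin := inferInstance
  mult u v := if H.Adj u v then 2 else 0
  symm := by
    intro u v
    by_cases h : H.Adj u v
    · rw [if_pos h, if_pos h.symm]
    · rw [if_neg h, if_neg fun h' => h h'.symm]
  loopless := fun v => if_neg (H.loopless.irrefl v)

end MG

end

/-!
A heavy triangle (a triangle with a connection of size at least 2) reproduces itself under
Δ-YY: the new vertex forms a heavy triangle with the two ends of the heavy connection. So the
class of a multigraph containing one has members of every order.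

The other excluded configurations reduce to a heavy triangle by spending add-ons. In a
6-regular multigraph, let the addition vertex `v` of an add-on have double edges to two vertices
`a`, `c` outside it. If the add-on is a double edge, the degree bound makes `v` the centre of a
wye on `a`, `c` and its partner; if it is a delta `v p q`, the same holds for `v` after the
Δ-YY on `v p q`. Either way the YY-Δ on that wye adds an edge `ac`. For an add-on of positive
length, the inner add-on is spent first to join the two neighbours of `v`, which creates the
delta. Spending the add-ons of configurations (2)–(4) closes a heavy triangle.
-/

namespace MG

attribute [local instance] MG.fin

variable {G H : MG}

lemma Adj.ne {x y : G.V} (h : G.Adj x y) : x ≠ y := by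
  rintro rfl
  simp [Adj, G.loopless] at h

lemma Adj.symm {x y : G.V} (h : G.Adj x y) : G.Adj y x := by
  rwa [Adj, G.symm]

lemma DYYEquiv.trans {K : MG} (h₁ : DYYEquiv G H) (h₂ : DYYEquiv H K) : DYYEquiv G K :=
  Relation.EqvGen.trans _ _ _ h₁ h₂

lemma DYYEquiv.of_isDelta {u v w : G.V} (h : G.IsDelta u v w) :
    DYYEquiv G (G.deltaYY u v w) :=
  .rel _ _ (.inl (.inl ⟨u, v, w, h, ⟨Equiv.refl _, fun _ _ => rfl⟩⟩))

lemma DYYEquiv.of_isWye {x u v w : G.V} (h : G.IsWye x u v w) :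
    DYYEquiv G (G.yyDelta x u v w) :=
  .rel _ _ (.inl (.inr ⟨x, u, v, w, h, ⟨Equiv.refl _, fun _ _ => rfl⟩⟩))

section triCount

variable {α : Type} {u v w x y : α}

lemma triCount_eq_ite : triCount u v w x y =
    if (x = u ∧ y = v) ∨ (x = v ∧ y = u) ∨ (x = u ∧ y = w) ∨ (x = w ∧ y = u) ∨
      (x = v ∧ y = w) ∨ (x = w ∧ y = v) then 1 else 0 := by
  unfold triCount
  congr 1
  simp only [Set.mem_insert_iff, Set.mem_singleton_iff, Sym2.eq_iff, eq_iff_iff]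
  tauto

lemma triCount_comm_left : triCount u v w x y = triCount v u w x y := by
  simp only [triCount_eq_ite]
  congr 1
  exact propext (by tauto)

lemma triCount_eq_zero (hxv : x ≠ v) (hxw : x ≠ w) (hyv : y ≠ v) (hyw : y ≠ w) :
    triCount u v w x y = 0 := by
  rw [triCount_eq_ite, if_neg]
  tauto

lemma triCount_eq_zero_right (hyu : y ≠ u) (hyv : y ≠ v) (hyw : y ≠ w) :
    triCount u v w x y = 0 := by
  rw [triCount_eq_ite, if_neg]
  tauto

lemma triCount_self (huv : u ≠ v) (huw : u ≠ w) (hvw : v ≠ w) : triCount u v w x x = 0 := by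
  rw [triCount_eq_ite, if_neg]
  rintro (⟨rfl, h⟩ | ⟨rfl, h⟩ | ⟨rfl, h⟩ | ⟨rfl, h⟩ | ⟨rfl, h⟩ | ⟨rfl, h⟩) <;> tauto

lemma sum_triCount [Fintype α] (huv : u ≠ v) (huw : u ≠ w) (hvw : v ≠ w) (x : α) :
    ∑ y, triCount u v w x y = if x = u ∨ x = v ∨ x = w then 2 else 0 := by
  simp only [triCount_eq_ite]
  rcases eq_or_ne x u with rfl | hu
  · rw [Fintype.sum_eq_add v w hvw] <;> simp_all
  rcases eq_or_ne x v with rfl | hv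
  · rw [Fintype.sum_eq_add u w huw] <;> simp_all
  rcases eq_or_ne x w with rfl | hw
  · rw [Fintype.sum_eq_add u v huv] <;> simp_all
  simp_all

end triCount

def HasHeavyTriangle (G : MG) : Prop :=
  ∃ a b c : G.V, a ≠ b ∧ a ≠ c ∧ b ≠ c ∧ 2 ≤ G.mult a b ∧ 1 ≤ G.mult a c ∧ 1 ≤ G.mult b c

lemma Iso.order_eq (h : Iso G H) : G.order = H.order :=
  let ⟨e, _⟩ := h
  Fintype.card_congr e

lemma order_deltaYY (u v w : G.V) : (G.deltaYY u v w).order = G.order + 1 :=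
  Fintype.card_option

lemma HasHeavyTriangle.exists_dyyEquiv_order_le (h : G.HasHeavyTriangle) (n : ℕ) :
    ∃ H, DYYEquiv G H ∧ H.HasHeavyTriangle ∧ n ≤ H.order := by
  induction n with
  | zero => exact ⟨G, .refl G, h, Nat.zero_le _⟩
  | succ n ih =>
    obtain ⟨H, hGH, ⟨a, b, c, hab, hac, hbc, mab, mac, mbc⟩, hn⟩ := ih
    have hd : H.IsDelta a b c := ⟨hab, hac, hbc, zero_lt_two.trans_le mab, mac, mbc⟩
    refine ⟨H.deltaYY a b c, hGH.trans (.of_isDelta hd), ⟨none, some a, some b,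
      (Option.some_ne_none a).symm, (Option.some_ne_none b).symm, (Option.some_injective _).ne hab,
      by change 2 ≤ ite _ _ _; simp, by change 1 ≤ ite _ _ _; simp, ?_⟩,
      (order_deltaYY a b c).symm ▸ Nat.succ_le_succ hn⟩
    change 1 ≤ H.mult a b - triCount a b c a b
    rw [triCount_eq_ite, if_pos (Or.inl ⟨rfl, rfl⟩)]
    omega

theorem not_finiteClass_of_heavyTriangle (hGH : DYYEquiv G H) (hH : H.HasHeavyTriangle) :
    ¬ G.FiniteClass := by
  rintro ⟨S, hS⟩
  obtain ⟨K, hHK, -, hK⟩ := hH.exists_dyyEquiv_order_le (S.sup order + 1)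
  obtain ⟨K', hK', hiso⟩ := hS K (hGH.trans hHK)
  have := Finset.le_sup (f := order) hK'
  have := hiso.order_eq
  omega

lemma IsDelta.triCount_le {u v w : G.V} (hd : G.IsDelta u v w) (a b : G.V) :
    triCount u v w a b ≤ G.mult a b := by
  obtain ⟨-, -, -, huv, huw, hvw⟩ := hd
  rw [triCount_eq_ite]
  split_ifs with h
  · rcases h with ⟨rfl, rfl⟩ | ⟨rfl, rfl⟩ | ⟨rfl, rfl⟩ | ⟨rfl, rfl⟩ | ⟨rfl, rfl⟩ | ⟨rfl, rfl⟩
    exacts [huv, huv.symm, huw, huw.symm, hvw, hvw.symm]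
  · exact Nat.zero_le _

lemma IsWye.mult_eq {x u v w : G.V} (hw : G.IsWye x u v w) (a : G.V) :
    G.mult a x = if a = u ∨ a = v ∨ a = w then 2 else 0 := by
  obtain ⟨-, -, -, -, -, -, hu, hv, hw, h0⟩ := hw
  rw [G.symm]
  split_ifs with h
  · rcases h with rfl | rfl | rfl <;> assumption
  · simp only [not_or] at h
    exact h0 a h.1 h.2.1 h.2.2

lemma Regular.sum_mult_le (hG : G.Regular 6) (x : G.V) (t : Finset G.V) :
    ∑ y ∈ t, G.mult x y ≤ 6 :=
  calc ∑ y ∈ t, G.mult x y ≤ ∑ y, G.mult x y := Finset.sum_le_sum_of_subset t.subset_univ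
    _ = 6 := hG x

lemma Regular.isWye (hG : G.Regular 6) {x u v w : G.V} (huv : u ≠ v) (huw : u ≠ w) (hvw : v ≠ w)
    (hu : 2 ≤ G.mult x u) (hv : 2 ≤ G.mult x v) (hw : 2 ≤ G.mult x w) : G.IsWye x u v w := by
  have hsum := hG.sum_mult_le x {u, v, w}
  rw [Finset.sum_insert (by simp [huv, huw]), Finset.sum_pair hvw] at hsum
  refine ⟨huv, huw, hvw, Adj.ne (zero_lt_two.trans_le hu), Adj.ne (zero_lt_two.trans_le hv),
    Adj.ne (zero_lt_two.trans_le hw), by omega, by omega, by omega, fun y hyu hyv hyw => ?_⟩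
  have h := hG.sum_mult_le x {y, u, v, w}
  rw [Finset.sum_insert (by simp [hyu, hyv, hyw]), Finset.sum_insert (by simp [huv, huw]),
    Finset.sum_pair hvw] at h
  omega

lemma Regular.deltaYY (hG : G.Regular 6) {u v w : G.V} (hd : G.IsDelta u v w) :
    (G.deltaYY u v w).Regular 6 := by
  have hle := hd.triCount_le
  obtain ⟨huv, huw, hvw, -⟩ := hd
  rintro (_ | a)
  · change ∑ b : Option G.V, G.deltaMult u v w none b = 6
    simp only [Fintype.sum_option, deltaMult]
    rw [Finset.sum_ite, Finset.sum_const_zero, Finset.sum_const, smul_eq_mul,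
      show Finset.univ.filter (fun b => b = u ∨ b = v ∨ b = w) = {u, v, w} by ext; simp,
      Finset.card_eq_three.2 ⟨u, v, w, huv, huw, hvw, rfl⟩]
    rfl
  · change ∑ b : Option G.V, G.deltaMult u v w (some a) b = 6
    simp only [Fintype.sum_option, deltaMult]
    rw [← sum_triCount huv huw hvw a, Finset.sum_tsub_distrib _ fun b _ => hle a b,
      Nat.add_sub_cancel' (Finset.sum_le_sum fun b _ => hle a b)]
    exact hG a

lemma Regular.yyDelta (hG : G.Regular 6) {x u v w : G.V} (hw : G.IsWye x u v w) :
    (G.yyDelta x u v w).Regular 6 := by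
  have hmx := hw.mult_eq
  obtain ⟨huv, huw, hvw, hxu, hxv, hxw, -⟩ := hw
  rintro ⟨a, hax⟩
  -- Over all of `G`, `mult a + triCount a` sums to `6` plus exactly what `x` contributes.
  have hsum := Fintype.sum_eq_add_sum_subtype_ne (fun b => G.mult a b + triCount u v w a b) x
  have hdeg : ∑ b, G.mult a b = 6 := hG a
  rw [Finset.sum_add_distrib, hdeg, sum_triCount huv huw hvw, hmx,
    triCount_eq_zero_right hxu hxv hxw] at hsum
  change ∑ b : {y // y ≠ x}, (if ⟨a, hax⟩ = b then 0 else G.mult a b + triCount u v w a b) = 6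
  rw [Finset.sum_congr rfl (g := fun b : {y // y ≠ x} => G.mult a b + triCount u v w a b)
    fun b _ => ?_]
  · omega
  · split_ifs with h
    · rw [← h, G.loopless, triCount_self huv huw hvw]
    · rfl

lemma AddOnAt.mem {v : G.V} {T : Set G.V} (h : G.AddOnAt v T) : v ∈ T := by
  cases h <;> simp

/-- Only lower bounds on multiplicities are tracked: add-ons and excluded configurations are
defined by lower bounds, and 6-regularity recovers exact values where they are needed. -/
def EmbOn (f : G.V → H.V) (U : Set G.V) : Prop :=
  Set.InjOn f U ∧ ∀ x ∈ U, ∀ y ∈ U, G.mult x y ≤ H.mult (f x) (f y)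

namespace EmbOn

variable {f : G.V → H.V} {U U' : Set G.V} {x y : G.V}

lemma ne (hf : EmbOn f U) (hx : x ∈ U) (hy : y ∈ U) (hxy : x ≠ y) : f x ≠ f y :=
  hf.1.ne hx hy hxy

lemma le (hf : EmbOn f U) (hx : x ∈ U) (hy : y ∈ U) : G.mult x y ≤ H.mult (f x) (f y) :=
  hf.2 x hx y hy

lemma adj (hf : EmbOn f U) (hx : x ∈ U) (hy : y ∈ U) (h : G.Adj x y) : H.Adj (f x) (f y) :=
  h.trans_le (hf.le hx hy)

lemma mono (hf : EmbOn f U) (h : U' ⊆ U) : EmbOn f U' :=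
  ⟨hf.1.mono h, fun _ hx _ hy => hf.le (h hx) (h hy)⟩

lemma comp {K : MG} {g : H.V → K.V} {W : Set H.V} (hg : EmbOn g W) (hf : EmbOn f U)
    (hfU : Set.MapsTo f U W) : EmbOn (g ∘ f) U :=
  ⟨hg.1.comp hf.1 hfU, fun _ hx _ hy => (hf.le hx hy).trans (hg.le (hfU hx) (hfU hy))⟩

lemma image_notMem {T : Set G.V} (hf : EmbOn f U) (hT : T ⊆ U) (hx : x ∈ U) (hxT : x ∉ T) :
    f x ∉ f '' T :=
  fun h => hxT ((hf.1.mem_image_iff hT hx).1 h)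

end EmbOn

lemma AddOnAt.map {f : G.V → H.V} {v : G.V} {T : Set G.V} (hT : G.AddOnAt v T)
    (hf : EmbOn f T) : H.AddOnAt (f v) (f '' T) := by
  induction hT with
  | double a b hab h =>
    rw [Set.image_pair]
    exact .double _ _ (hf.ne (by simp) (by simp) hab) (h.trans (hf.le (by simp) (by simp)))
  | delta a b c hab hac hbc h₁ h₂ h₃ =>
    rw [Set.image_insert_eq, Set.image_pair]
    exact .delta _ _ _ (hf.ne (by simp) (by simp) hab) (hf.ne (by simp) (by simp) hac)
      (hf.ne (by simp) (by simp) hbc) (h₁.trans (hf.le (by simp) (by simp)))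
      (h₂.trans (hf.le (by simp) (by simp))) (h₃.trans (hf.le (by simp) (by simp)))
  | link a b c d S hab hac had hbc hbd hcd h₁ h₂ h₃ h₄ hS hdisj ih =>
    have hsub : S ⊆ {a, b, d} ∪ S := Set.subset_union_right
    have hc : c ∈ {a, b, d} ∪ S := hsub hS.mem
    have himage : f '' {a, b, d} = {f a, f b, f d} := by
      rw [Set.image_insert_eq, Set.image_pair]
    rw [Set.image_union, himage]
    refine .link _ _ _ _ _ (hf.ne (by simp) (by simp) hab) (hf.ne (by simp) hc hac)
      (hf.ne (by simp) (by simp) had) (hf.ne (by simp) hc hbc) (hf.ne (by simp) (by simp) hbd)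
      (hf.ne hc (by simp) hcd) (h₁.trans (hf.le (by simp) (by simp)))
      (h₂.trans (hf.le (by simp) (by simp))) (h₃.trans (hf.le (by simp) hc))
      (h₄.trans (hf.le hc (by simp))) (ih (hf.mono hsub)) ?_
    rw [← himage, ← hf.1.image_inter hsub Set.subset_union_left, hdisj, Set.image_empty]

def Joinable (G : MG) (U : Set G.V) (a c : G.V) : Prop :=
  ∃ (H : MG) (f : G.V → H.V), DYYEquiv G H ∧ H.Regular 6 ∧ EmbOn f U ∧ H.Adj (f a) (f c)

namespace Joinable

variable {U U' : Set G.V} {a c : G.V}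

lemma mono (h : G.Joinable U a c) (hU : U' ⊆ U) : G.Joinable U' a c :=
  let ⟨H, f, hGH, hH, hf, hadj⟩ := h
  ⟨H, f, hGH, hH, hf.mono hU, hadj⟩

lemma of_embOn {f : G.V → H.V} {W : Set H.V} (hGH : DYYEquiv G H) (hf : EmbOn f U)
    (hfU : Set.MapsTo f U W) (h : H.Joinable W (f a) (f c)) : G.Joinable U a c :=
  let ⟨K, g, hHK, hK, hg, hadj⟩ := h
  ⟨K, g ∘ f, hGH.trans hHK, hK, hg.comp hf hfU, hadj⟩

end Joinable

lemma embOn_some_deltaYY {u v w : G.V} {U : Set G.V}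
    (hU : ∀ y ∈ U, ∀ z ∈ U, triCount u v w y z = 0) : EmbOn (H := G.deltaYY u v w) some U :=
  ⟨(Option.some_injective _).injOn, fun y hy z hz => by
    change _ ≤ G.mult y z - _
    rw [hU y hy z hz, Nat.sub_zero]⟩

lemma embOn_some_deltaYY_compl_vw (u v w : G.V) :
    EmbOn (H := G.deltaYY u v w) some {v, w}ᶜ :=
  embOn_some_deltaYY fun y hy z hz => by
    simp only [Set.mem_compl_iff, Set.mem_insert_iff, Set.mem_singleton_iff, not_or] at hy hz
    exact triCount_eq_zero hy.1 hy.2 hz.1 hz.2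

lemma embOn_some_deltaYY_compl_uw (u v w : G.V) :
    EmbOn (H := G.deltaYY u v w) some {u, w}ᶜ :=
  embOn_some_deltaYY fun y hy z hz => by
    simp only [Set.mem_compl_iff, Set.mem_insert_iff, Set.mem_singleton_iff, not_or] at hy hz
    exact triCount_comm_left.trans (triCount_eq_zero hy.1 hy.2 hz.1 hz.2)

lemma Regular.joinable_of_isWye (hG : G.Regular 6) {x u v w : G.V} (hw : G.IsWye x u v w) :
    G.Joinable {x}ᶜ u v := by
  have huv : u ≠ v := hw.1
  have hxu : x ≠ u := hw.2.2.2.1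
  have hxv : x ≠ v := hw.2.2.2.2.1
  let f : G.V → (G.yyDelta x u v w).V := fun y => if h : y = x then ⟨u, hxu.symm⟩ else ⟨y, h⟩
  have hf (y : G.V) (hy : y ≠ x) : f y = ⟨y, hy⟩ := dif_neg hy
  refine ⟨_, f, .of_isWye hw, hG.yyDelta hw, ⟨fun y hy z hz h => ?_, fun y hy z hz => ?_⟩, ?_⟩
  · rw [hf y hy, hf z hz] at h
    exact congrArg Subtype.val h
  · rw [hf y hy, hf z hz]
    change _ ≤ ite _ _ _
    split_ifs with h
    · obtain rfl : y = z := congrArg Subtype.val h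
      rw [G.loopless]
    · exact Nat.le_add_right _ _
  · rw [hf u hxu.symm, hf v hxv.symm]
    change 0 < ite _ _ _
    rw [if_neg (fun h => huv (congrArg Subtype.val h)), triCount_eq_ite, if_pos (by tauto)]
    omega

lemma Regular.joinable_of_isDelta (hG : G.Regular 6) {x p q a c : G.V} (hd : G.IsDelta x p q)
    (hxa : 2 ≤ G.mult x a) (hxc : 2 ≤ G.mult x c) (hac : a ≠ c)
    (hap : a ≠ p) (haq : a ≠ q) (hcp : c ≠ p) (hcq : c ≠ q) :
    G.Joinable {x, p, q}ᶜ a c := by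
  have hsome := embOn_some_deltaYY_compl_vw x p q
  have hx : x ∈ ({p, q}ᶜ : Set G.V) := by simp [hd.1, hd.2.1]
  -- `x` now has double edges to `a`, `c` and the new vertex, so regularity makes it a wye centre.
  have hw : (G.deltaYY x p q).IsWye (some x) (some a) (some c) none :=
    (hG.deltaYY hd).isWye ((Option.some_injective _).ne hac) (Option.some_ne_none a)
      (Option.some_ne_none c)
      (hxa.trans (hsome.le hx (by simp [hap, haq])))
      (hxc.trans (hsome.le hx (by simp [hcp, hcq])))
      (by change 2 ≤ ite _ _ _; simp)
  refine .of_embOn (.of_isDelta hd) (hsome.mono ?_) ?_ ((hG.deltaYY hd).joinable_of_isWye hw)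
  · exact Set.compl_subset_compl.2 (by simp)
  · intro y hy h
    simp only [Set.mem_compl_iff, Set.mem_insert_iff, Set.mem_singleton_iff, not_or] at hy
    exact hy.1 (Option.some_injective _ h)

theorem AddOnAt.joinable (hG : G.Regular 6) {v : G.V} {S : Set G.V} (hS : G.AddOnAt v S)
    {a c : G.V} (ha : a ∉ S) (hc : c ∉ S) (hac : a ≠ c)
    (hva : 2 ≤ G.mult v a) (hvc : 2 ≤ G.mult v c) : G.Joinable Sᶜ a c := by
  induction hS generalizing a c with
  | double v e _ hve =>
    simp only [Set.mem_insert_iff, Set.mem_singleton_iff, not_or] at ha hc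
    exact (hG.joinable_of_isWye (hG.isWye hac ha.2 hc.2 hva hvc hve)).mono
      (Set.compl_subset_compl.2 (by simp))
  | delta v p q hvp hvq hpq mvp mvq mpq =>
    simp only [Set.mem_insert_iff, Set.mem_singleton_iff, not_or] at ha hc
    exact hG.joinable_of_isDelta ⟨hvp, hvq, hpq, mvp, mvq, mpq⟩ hva hvc hac
      ha.2.1 ha.2.2 hc.2.1 hc.2.2
  | link v p r q S₀ hvp _ hvq _ hpq _ mvp mvq mpr mrq _ hdisj ih =>
    obtain ⟨hv₀, hp₀, hq₀⟩ : v ∉ S₀ ∧ p ∉ S₀ ∧ q ∉ S₀ := by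
      simpa only [Set.disjoint_insert_right, Set.disjoint_singleton_right] using
        Set.disjoint_iff_inter_eq_empty.2 hdisj
    simp only [Set.mem_union, Set.mem_insert_iff, Set.mem_singleton_iff, not_or] at ha hc
    -- Joining `p` and `q` through the inner add-on turns `v p q` into a delta.
    obtain ⟨H, f, hGH, hH, hf, hfpq⟩ := ih hp₀ hq₀ hpq (by rwa [G.symm]) mrq
    refine .of_embOn hGH (hf.mono ?_) ?_ (hH.joinable_of_isDelta
      ⟨hf.ne hv₀ hp₀ hvp, hf.ne hv₀ hq₀ hvq, hf.ne hp₀ hq₀ hpq, hf.adj hv₀ hp₀ mvp,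
        hf.adj hv₀ hq₀ mvq, hfpq⟩
      (hva.trans (hf.le hv₀ ha.2)) (hvc.trans (hf.le hv₀ hc.2)) (hf.ne ha.2 hc.2 hac)
      (hf.ne ha.2 hp₀ ha.1.2.1) (hf.ne ha.2 hq₀ ha.1.2.2)
      (hf.ne hc.2 hp₀ hc.1.2.1) (hf.ne hc.2 hq₀ hc.1.2.2))
    · exact Set.compl_subset_compl.2 Set.subset_union_right
    · intro y hy
      simp only [Set.mem_compl_iff, Set.mem_union, Set.mem_insert_iff, Set.mem_singleton_iff,
        not_or] at hy ⊢
      exact ⟨hf.ne hy.2 hv₀ hy.1.1, hf.ne hy.2 hp₀ hy.1.2.1, hf.ne hy.2 hq₀ hy.1.2.2⟩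

theorem Regular.exists_heavyTriangle_of_fourCycle (hG : G.Regular 6) {a b c d : G.V} {S : Set G.V}
    (hac : a ≠ c) (mab : 2 ≤ G.mult a b) (mbc : 2 ≤ G.mult b c) (mcd : 2 ≤ G.mult c d)
    (mda : 1 ≤ G.mult d a)
    (hS : G.AddOnAt b S) (hSd : Disjoint S {a, c, d}) :
    ∃ H, DYYEquiv G H ∧ H.HasHeavyTriangle := by
  obtain ⟨ha, hc, hd⟩ : a ∉ S ∧ c ∉ S ∧ d ∉ S := by
    simpa only [Set.disjoint_insert_right, Set.disjoint_singleton_right] using hSd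
  obtain ⟨H, f, hGH, -, hf, hfac⟩ := hS.joinable hG ha hc hac (by rwa [G.symm]) mbc
  exact ⟨H, hGH, f c, f d, f a, hf.ne hc hd (Adj.ne (zero_lt_two.trans_le mcd)),
    hf.ne hc ha hac.symm, hf.ne hd ha (Adj.ne mda), mcd.trans (hf.le hc hd), hfac.symm,
    mda.trans (hf.le hd ha)⟩

theorem Regular.exists_heavyTriangle_of_fiveCycle (hG : G.Regular 6) {v₀ v₁ v₂ v₃ v₄ : G.V}
    {S T : Set G.V}
    (h₁₃ : v₁ ≠ v₃) (h₁₄ : v₁ ≠ v₄) (m₀₁ : 2 ≤ G.mult v₀ v₁) (m₁₂ : 2 ≤ G.mult v₁ v₂)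
    (m₂₃ : 2 ≤ G.mult v₂ v₃) (m₃₄ : 2 ≤ G.mult v₃ v₄) (m₄₀ : 2 ≤ G.mult v₄ v₀)
    (hS : G.AddOnAt v₀ S) (hT : G.AddOnAt v₂ T) (hSd : Disjoint S {v₁, v₂, v₃, v₄})
    (hTd : Disjoint T {v₀, v₁, v₃, v₄}) (hST : Disjoint S T) :
    ∃ H, DYYEquiv G H ∧ H.HasHeavyTriangle := by
  obtain ⟨h₁, h₂, h₃, h₄⟩ : v₁ ∉ S ∧ v₂ ∉ S ∧ v₃ ∉ S ∧ v₄ ∉ S := by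
    simpa only [Set.disjoint_insert_right, Set.disjoint_singleton_right] using hSd
  obtain ⟨-, hT₁, hT₃, hT₄⟩ : v₀ ∉ T ∧ v₁ ∉ T ∧ v₃ ∉ T ∧ v₄ ∉ T := by
    simpa only [Set.disjoint_insert_right, Set.disjoint_singleton_right] using hTd
  have hTS : T ⊆ Sᶜ := hST.subset_compl_left
  -- Spending `S` joins `v₁` and `v₄`, leaving configuration (2) on the 4-cycle `v₁ v₂ v₃ v₄`.
  obtain ⟨H, f, hGH, hH, hf, hf₁₄⟩ := hS.joinable hG h₁ h₄ h₁₄ m₀₁ (by rwa [G.symm])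
  obtain ⟨K, hHK, hK⟩ := hH.exists_heavyTriangle_of_fourCycle (hf.ne h₁ h₃ h₁₃)
    (m₁₂.trans (hf.le h₁ h₂)) (m₂₃.trans (hf.le h₂ h₃)) (m₃₄.trans (hf.le h₃ h₄)) hf₁₄.symm
    (hT.map (hf.mono hTS)) (by
      simp only [Set.disjoint_insert_right, Set.disjoint_singleton_right]
      exact ⟨hf.image_notMem hTS h₁ hT₁, hf.image_notMem hTS h₃ hT₃,
        hf.image_notMem hTS h₄ hT₄⟩)
  exact ⟨K, hGH.trans hHK, hK⟩

theorem Regular.exists_heavyTriangle_of_fourCycle_triangle (hG : G.Regular 6) {a b c d e : G.V}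
    {S T : Set G.V}
    (hac : a ≠ c) (hbd : b ≠ d) (hbe : b ≠ e) (hce : c ≠ e)
    (mab : 2 ≤ G.mult a b) (mbc : 2 ≤ G.mult b c) (mcd : 2 ≤ G.mult c d)
    (mda : 1 ≤ G.mult d a) (mde : 1 ≤ G.mult d e) (mea : 1 ≤ G.mult e a)
    (hS : G.AddOnAt a S) (hT : G.AddOnAt d T) (hSd : Disjoint S {b, c, d, e})
    (hTd : Disjoint T {a, b, c, e}) (hST : Disjoint S T) :
    ∃ H, DYYEquiv G H ∧ H.HasHeavyTriangle := by
  obtain ⟨hbS, hcS, hdS, heS⟩ : b ∉ S ∧ c ∉ S ∧ d ∉ S ∧ e ∉ S := by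
    simpa only [Set.disjoint_insert_right, Set.disjoint_singleton_right] using hSd
  obtain ⟨haT, hbT, hcT, heT⟩ : a ∉ T ∧ b ∉ T ∧ c ∉ T ∧ e ∉ T := by
    simpa only [Set.disjoint_insert_right, Set.disjoint_singleton_right] using hTd
  have hdelta : G.IsDelta a d e :=
    ⟨(Adj.ne mda).symm, (Adj.ne mea).symm, Adj.ne mde, Adj.symm mda, Adj.symm mea, mde⟩
  have hcd : c ≠ d := Adj.ne (zero_lt_two.trans_le mcd)
  have hsomeS := embOn_some_deltaYY_compl_vw a d e
  have hsomeT := embOn_some_deltaYY_compl_uw a d e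
  have hnone (X : Set G.V) : (none : (G.deltaYY a d e).V) ∉ some '' X := by
    rintro ⟨_, _, h⟩
    exact Option.some_ne_none _ h
  have hsome {x : G.V} {X : Set G.V} (hx : x ∉ X) : (some x : (G.deltaYY a d e).V) ∉ some '' X :=
    fun h => hx ((Option.some_injective _).mem_set_image.1 h)
  -- The Δ-YY on `a d e` creates `none`, doubly joined to `a` and `d`. Spending `S` at `a` joins
  -- `b` to `none`, leaving configuration (2) on the 4-cycle `none d c b` with `T` at `d`.
  have hS₁ : (G.deltaYY a d e).AddOnAt (some a) (some '' S) := hS.map (hsomeS.mono fun x hx => by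
    rintro (rfl | rfl); exacts [hdS hx, heS hx])
  have hT₁ : (G.deltaYY a d e).AddOnAt (some d) (some '' T) := hT.map (hsomeT.mono fun x hx => by
    rintro (rfl | rfl); exacts [haT hx, heT hx])
  obtain ⟨H, f, hGH, hH, hf, hfbn⟩ := hS₁.joinable (hG.deltaYY hdelta) (hsome hbS) (hnone S)
    (Option.some_ne_none b)
    (mab.trans (hsomeS.le (by simp [hdelta.1, hdelta.2.1]) (by simp [hbd, hbe])))
    (by change 2 ≤ ite _ _ _; simp)
  have hTS : some '' T ⊆ (some '' S)ᶜ := by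
    rintro _ ⟨x, hx, rfl⟩
    exact hsome (hST.subset_compl_left hx)
  obtain ⟨K, hHK, hK⟩ := hH.exists_heavyTriangle_of_fourCycle
    (hf.ne (hnone S) (hsome hcS) (Option.some_ne_none c).symm)
    ((show 2 ≤ (G.deltaYY a d e).mult none (some d) by change 2 ≤ ite _ _ _; simp).trans
      (hf.le (hnone S) (hsome hdS)))
    ((G.symm d c ▸ mcd).trans ((hsomeT.le (by simp [hdelta.1.symm, hdelta.2.2])
      (by simp [hac.symm, hce])).trans (hf.le (hsome hdS) (hsome hcS))))
    ((G.symm c b ▸ mbc).trans ((hsomeS.le (by simp [hcd, hce]) (by simp [hbd, hbe])).trans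
      (hf.le (hsome hcS) (hsome hbS))))
    hfbn (hT₁.map (hf.mono hTS)) (by
      simp only [Set.disjoint_insert_right, Set.disjoint_singleton_right]
      exact ⟨hf.image_notMem hTS (hnone S) (hnone T), hf.image_notMem hTS (hsome hcS) (hsome hcT),
        hf.image_notMem hTS (hsome hbS) (hsome hbT)⟩)
  exact ⟨K, (DYYEquiv.of_isDelta hdelta).trans (hGH.trans hHK), hK⟩

end MG

/-- Any 6-regular multigraph containing one of the excluded
subgraphs lies in an infinite Δ-YY equivalence class. -/
theorem stmt_9 (G : MG) (h6 : G.Regular 6) (hex : G.HasExcluded) :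
    ¬ G.FiniteClass := by
  obtain ⟨H, hGH, hH⟩ : ∃ H, MG.DYYEquiv G H ∧ H.HasHeavyTriangle := by
    simp only [MG.HasExcluded, ← Set.disjoint_iff_inter_eq_empty] at hex
    rcases hex with h | ⟨a, b, c, d, S, -, hac, -, -, -, -, mab, mbc, mcd, mda, hS, hSd⟩ |
      ⟨v₀, v₁, v₂, v₃, v₄, S, T, -, -, -, -, -, h₁₃, h₁₄, -, -, -, m₀₁, m₁₂, m₂₃, m₃₄, m₄₀,
        hS, hT, hSd, hTd, hST⟩ |
      ⟨a, b, c, d, e, S, T, -, hac, -, -, -, hbd, hbe, -, hce, -, mab, mbc, mcd, mda, mde, mea,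
        hS, hT, hSd, hTd, hST⟩
    · exact ⟨G, .refl G, h⟩
    · exact h6.exists_heavyTriangle_of_fourCycle hac mab mbc mcd mda hS hSd
    · exact h6.exists_heavyTriangle_of_fiveCycle h₁₃ h₁₄ m₀₁ m₁₂ m₂₃ m₃₄ m₄₀ hS hT hSd hTd hST
    · exact h6.exists_heavyTriangle_of_fourCycle_triangle hac hbd hbe hce mab mbc mcd mda.ge mde mea
        hS hT hSd hTd hST
  exact MG.not_finiteClass_of_heavyTriangle hGH hH
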